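/- For every α ∈ ℝ, ∫_{−∞}^∞ exp( −iα(u − i) − (u − i)²/4 ) · (u − i)^(−2) du = π ( α erfc(α) − e^(−α²)/π^(1/2) ). -/

import Mathlib

open MeasureTheory
open scoped Topology

/-- The complementary error function `erfc(x) = (2/√π) ∫_x^∞ e^{−t²} dt`. -/

noncomputable def erfc (x : ℝ) : ℝ :=
  (2 / Real.sqrt Real.pi) * ∫ t in Set.Ioi x, Real.exp (-t ^ 2)

open Set Filter Asymptotics Complex

private lemma tendsto_mul_exp_neg0 {c : ℝ} (hc : 0 < c) :
    Tendsto (fun t : ℝ => t * Real.exp (-(c * t))) atTop (𝓝 0) := by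
  have h := (Real.tendsto_pow_mul_exp_neg_atTop_nhds_zero 1).comp
    (tendsto_id.const_mul_atTop hc)
  have h2 := h.const_mul (1 / c)
  rw [mul_zero] at h2
  refine h2.congr fun t => ?_
  simp only [Function.comp, pow_one, id_eq]
  field_simp

private lemma integrableOn_mul_exp_neg0 {r : ℝ} (hr : 0 < r) :
    IntegrableOn (fun t : ℝ => t * Real.exp (-(r * t))) (Ioi 0) := by
  refine integrable_of_isBigO_exp_neg (half_pos hr) ?_ ?_
  · exact (continuous_id.mul (Real.continuous_exp.comp
      (continuous_const.mul continuous_id).neg)).continuousOn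
  · rw [isBigO_iff]
    refine ⟨1, ?_⟩
    have h0 : ∀ᶠ t in atTop, t * Real.exp (-(r / 2 * t)) ≤ 1 :=
      (tendsto_mul_exp_neg0 (half_pos hr)).eventually_le_const one_pos
    filter_upwards [h0, eventually_ge_atTop (0 : ℝ)] with t h1 h2
    simp only [Real.norm_eq_abs]
    rw [_root_.abs_of_nonneg (by positivity : (0:ℝ) ≤ t * Real.exp (-(r * t))),
      _root_.abs_of_nonneg (Real.exp_pos _).le, one_mul]
    calc t * Real.exp (-(r * t)) = (t * Real.exp (-(r / 2 * t))) * Real.exp (-(r / 2) * t) := by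
          rw [mul_assoc, ← Real.exp_add]; ring_nf
      _ ≤ 1 * Real.exp (-(r / 2) * t) := by
          exact mul_le_mul_of_nonneg_right h1 (Real.exp_pos _).le
      _ = Real.exp (-(r / 2) * t) := one_mul _

private lemma integral_mul_cexp0 {w : ℂ} (hw : 0 < w.re) :
    ∫ t in Ioi (0:ℝ), (t : ℂ) * Complex.exp (-(w * t)) = (w ^ 2)⁻¹ := by
  have hw0 : w ≠ 0 := fun h => by simp [h] at hw
  have hint : IntegrableOn (fun t : ℝ => (t : ℂ) * Complex.exp (-(w * t))) (Ioi 0) := by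
    refine Integrable.mono' (integrableOn_mul_exp_neg0 hw) ?_ ?_
    · exact (Complex.continuous_ofReal.mul (Complex.continuous_exp.comp
        ((continuous_const.mul Complex.continuous_ofReal).neg))).aestronglyMeasurable
    · refine (ae_restrict_iff' measurableSet_Ioi).mpr (ae_of_all _ fun t ht => ?_)
      simp only [norm_mul, Complex.norm_real, Real.norm_eq_abs, Complex.norm_exp]
      rw [_root_.abs_of_pos (mem_Ioi.mp ht)]
      gcongr
      · exact ht.le
      simp [Complex.mul_re]
  set F : ℝ → ℂ := fun t => -(w * t + 1) / w ^ 2 * Complex.exp (-(w * t)) with hF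
  have hderiv : ∀ t : ℝ, HasDerivAt F ((t : ℂ) * Complex.exp (-(w * t))) t := by
    intro t
    have h1 : HasDerivAt (fun z : ℂ => -(w * z + 1) / w ^ 2) (-w / w ^ 2) (t : ℂ) := by
      simpa using (((hasDerivAt_id (t : ℂ)).const_mul w).add_const 1).neg.div_const (w ^ 2)
    have h2 : HasDerivAt (fun z : ℂ => Complex.exp (-(w * z)))
        (Complex.exp (-(w * (t : ℂ))) * -w) (t : ℂ) := by
      simpa using (((hasDerivAt_id (t : ℂ)).const_mul w).neg).cexp
    have hE := h1.mul h2
    have hE' : HasDerivAt (fun z : ℂ => -(w * z + 1) / w ^ 2 * Complex.exp (-(w * z)))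
        ((t : ℂ) * Complex.exp (-(w * (t : ℂ)))) (t : ℂ) := by
      refine hE.congr_deriv ?_
      have := Complex.exp_ne_zero (-(w * (t : ℂ)))
      field_simp
      ring
    exact hE'.comp_ofReal
  have htend : Tendsto F atTop (𝓝 0) := by
    have hb : Tendsto (fun t : ℝ => (‖w‖ * (t * Real.exp (-(w.re * t))) + Real.exp (-(w.re * t))) * ‖(w ^ 2)⁻¹‖) atTop (𝓝 0) := by
      have he : Tendsto (fun t : ℝ => Real.exp (-(w.re * t))) atTop (𝓝 0) :=
        Real.tendsto_exp_atBot.comp ((tendsto_neg_atTop_atBot).comp (tendsto_id.const_mul_atTop hw))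
      exact (((tendsto_mul_exp_neg0 hw).const_mul ‖w‖).add he).mul_const ‖(w ^ 2)⁻¹‖ |>.congr' (by filter_upwards with t; ring) |>.mono_right (by simp)
    refine squeeze_zero_norm' ?_ hb
    filter_upwards [eventually_ge_atTop (0 : ℝ)] with t ht
    rw [hF]
    simp only [norm_mul, norm_div]
    rw [Complex.norm_exp]
    have h1 : ‖-(w * (t : ℂ) + 1)‖ ≤ ‖w‖ * t + 1 := by
      rw [norm_neg]
      refine (norm_add_le _ _).trans ?_
      simp only [norm_mul, norm_one]
      rw [Complex.norm_real, Real.norm_eq_abs, _root_.abs_of_nonneg ht]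
    have h2 : (-(w * (t : ℂ))).re = -(w.re * t) := by simp [Complex.mul_re]
    rw [h2, div_eq_mul_inv, ← norm_inv]
    calc ‖-(w * (t:ℂ) + 1)‖ * ‖(w ^ 2)⁻¹‖ * Real.exp (-(w.re * t))
        ≤ (‖w‖ * t + 1) * ‖(w ^ 2)⁻¹‖ * Real.exp (-(w.re * t)) := by
          gcongr
      _ = (‖w‖ * (t * Real.exp (-(w.re * t))) + Real.exp (-(w.re * t))) * ‖(w ^ 2)⁻¹‖ := by ring
  have := integral_Ioi_of_hasDerivAt_of_tendsto' (a := 0) (fun x _ => hderiv x) hint htend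
  rw [this, hF]
  simp only [Complex.ofReal_zero, mul_zero, neg_zero, zero_add, Complex.exp_zero, mul_one]
  field_simp
  ring

private lemma integral_id_mul_exp_Ioi0 (a : ℝ) :
    ∫ s in Ioi a, s * Real.exp (-s ^ 2) = Real.exp (-a ^ 2) / 2 := by
  have hd : ∀ s ∈ Ici a, HasDerivAt (fun s : ℝ => -Real.exp (-s ^ 2) / 2)
      (s * Real.exp (-s ^ 2)) s := by
    intro s _
    have := (((hasDerivAt_pow 2 s).neg).exp).neg.div_const 2
    refine this.congr_deriv ?_
    simp
    ring
  have hi : IntegrableOn (fun s : ℝ => s * Real.exp (-s ^ 2)) (Ioi a) := by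
    have := (integrable_mul_exp_neg_mul_sq one_pos).integrableOn (s := Ioi a)
    simpa using this
  have ht : Tendsto (fun s : ℝ => -Real.exp (-s ^ 2) / 2) atTop (𝓝 0) := by
    have h1 : Tendsto (fun s : ℝ => Real.exp (-s ^ 2)) atTop (𝓝 0) :=
      Real.tendsto_exp_atBot.comp (tendsto_neg_atTop_atBot.comp (tendsto_pow_atTop two_ne_zero))
    simpa using h1.neg.div_const 2
  have := integral_Ioi_of_hasDerivAt_of_tendsto' hd hi ht
  rw [this]
  ring

private lemma integral_shift0 (a : ℝ) (f : ℝ → ℝ) :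
    ∫ t in Ioi (0:ℝ), f (t + a) = ∫ s in Ioi a, f s := by
  have h := (measurePreserving_add_right volume a).setIntegral_preimage_emb
    (measurableEmbedding_addRight a) f (Ioi a)
  have hs : (fun x : ℝ => x + a) ⁻¹' (Ioi a) = Ioi 0 := by
    ext x; simp
  rw [hs] at h
  exact h

private lemma inner0 (β : ℂ) :
    ∫ u : ℝ, Complex.exp (-Complex.I * β * ((u:ℂ) - Complex.I) - ((u:ℂ) - Complex.I)^2/4)
      = 2 * Real.sqrt Real.pi * Complex.exp (-β^2) := by
  have hb : (-(1/4) : ℂ).re < 0 := by norm_num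
  have hexp : ∀ u : ℝ, -Complex.I * β * ((u:ℂ) - Complex.I) - ((u:ℂ) - Complex.I)^2/4
      = (-(1/4):ℂ) * (u:ℂ)^2 + (Complex.I/2 - Complex.I*β) * (u:ℂ) + (1/4 - β) := by
    intro u
    linear_combination (β - 1/4) * Complex.I_sq
  simp_rw [hexp]
  rw [integral_cexp_quadratic hb]
  have harg : (1/4 - β) - (Complex.I/2 - Complex.I*β)^2 / (4 * (-(1/4):ℂ)) = -β^2 := by
    linear_combination (1/4 - β + β^2) * Complex.I_sq
  rw [harg]
  have h4 : ((Real.pi:ℂ) / -(-(1/4):ℂ)) = ((4 * Real.pi : ℝ) : ℂ) := by push_cast; ring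
  have h12 : (1/2 : ℂ) = ((1/2 : ℝ) : ℂ) := by norm_num
  rw [h4, h12, ← Complex.ofReal_cpow (by positivity)]
  have : (4 * Real.pi) ^ (1/2 : ℝ) = 2 * Real.sqrt Real.pi := by
    rw [← Real.sqrt_eq_rpow, show (4:ℝ) * Real.pi = 2^2 * Real.pi by norm_num,
      Real.sqrt_mul (by positivity), Real.sqrt_sq (by norm_num)]
  rw [this]
  push_cast
  ring

private lemma pointwise0 (α u : ℝ) :
    Complex.exp (-Complex.I * α * ((u : ℂ) - Complex.I) - ((u : ℂ) - Complex.I) ^ 2 / 4) *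
      (((u : ℂ) - Complex.I) ^ 2)⁻¹
    = -∫ t in Ioi (0:ℝ), (t : ℂ) *
        Complex.exp (-Complex.I * ((α : ℂ) + t) * ((u : ℂ) - Complex.I)
          - ((u : ℂ) - Complex.I) ^ 2 / 4) := by
  set z : ℂ := (u : ℂ) - Complex.I with hz
  have hw : 0 < (Complex.I * z).re := by
    simp [hz, Complex.mul_re]
  have h1 := integral_mul_cexp0 hw
  have hsq : ((Complex.I * z) ^ 2)⁻¹ = -(z ^ 2)⁻¹ := by
    rw [mul_pow, Complex.I_sq, neg_one_mul, inv_neg]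
  have h2 : (z ^ 2)⁻¹ = -∫ t in Ioi (0:ℝ), (t:ℂ) * Complex.exp (-(Complex.I * z * (t:ℂ))) := by
    rw [h1, hsq, neg_neg]
  rw [h2, mul_neg, neg_inj, ← integral_const_mul]
  refine integral_congr_ae (Filter.Eventually.of_forall fun t => ?_)
  calc Complex.exp (-Complex.I * (α:ℂ) * z - z^2/4) * ((t:ℂ) * Complex.exp (-(Complex.I * z * (t:ℂ))))
      = (t:ℂ) * Complex.exp ((-Complex.I * (α:ℂ) * z - z^2/4) + -(Complex.I * z * (t:ℂ))) := by
        rw [Complex.exp_add]; ring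
    _ = (t:ℂ) * Complex.exp (-Complex.I * ((α:ℂ) + (t:ℂ)) * z - z^2/4) := by
        rw [show (-Complex.I * (α:ℂ) * z - z^2/4) + -(Complex.I * z * (t:ℂ))
          = -Complex.I * ((α:ℂ) + (t:ℂ)) * z - z^2/4 from by ring]

/-- The contour integral `H(α)` of the paper's Appendix D on the line `z = u − i`:
`∫_{−∞}^∞ exp(−iα(u−i) − (u−i)²/4) (u−i)^{−2} du = π(α erfc(α) − e^{−α²}/√π)`. -/
theorem contour_integral_H (α : ℝ) :
    ∫ u : ℝ, Complex.exp (-Complex.I * α * ((u : ℂ) - Complex.I)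
        - ((u : ℂ) - Complex.I) ^ 2 / 4) * (((u : ℂ) - Complex.I) ^ 2)⁻¹
      = (Real.pi : ℂ) * ((α : ℂ) * (erfc α : ℝ)
        - (Real.exp (-α ^ 2) : ℝ) / (Real.sqrt Real.pi : ℝ)) := by
  set g : ℝ → ℝ → ℂ := fun u t => (t : ℂ) *
    Complex.exp (-Complex.I * ((α : ℂ) + t) * ((u : ℂ) - Complex.I)
      - ((u : ℂ) - Complex.I) ^ 2 / 4) with hg
  -- Step 1
  have step1 : (∫ u : ℝ, Complex.exp (-Complex.I * α * ((u : ℂ) - Complex.I)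
        - ((u : ℂ) - Complex.I) ^ 2 / 4) * (((u : ℂ) - Complex.I) ^ 2)⁻¹)
      = -∫ u : ℝ, ∫ t in Ioi (0:ℝ), g u t := by
    rw [← integral_neg]
    refine integral_congr_ae (Filter.Eventually.of_forall fun u => ?_)
    simp only [hg]
    exact pointwise0 α u
  -- Step 2 : Fubini
  have hre : ∀ u t : ℝ, (-Complex.I * ((α:ℂ)+t) * ((u:ℂ)-Complex.I)
      - ((u:ℂ)-Complex.I)^2/4).re = 1/4 - α - t - u^2/4 := by
    intro u t
    simp [Complex.mul_re, Complex.mul_im, Complex.div_re, Complex.normSq_apply, pow_two]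
    ring
  have hInt : Integrable (Function.uncurry g)
      ((volume : Measure ℝ).prod (volume.restrict (Ioi 0))) := by
    have hcont : Continuous (Function.uncurry g) := by
      apply Continuous.mul
      · exact Complex.continuous_ofReal.comp continuous_snd
      · apply Complex.continuous_exp.comp
        fun_prop
    have hgt : IntegrableOn (fun t : ℝ => |t| * Real.exp (-t)) (Ioi 0) := by
      refine (integrableOn_mul_exp_neg0 one_pos).congr ?_
      refine (ae_restrict_iff' measurableSet_Ioi).mpr (Filter.Eventually.of_forall
        fun t (ht : t ∈ Ioi (0:ℝ)) => ?_)
      simp only []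
      rw [one_mul, _root_.abs_of_pos ht]
    refine Integrable.mono'
      (g := fun p : ℝ × ℝ => (Real.exp (1/4 - α) * Real.exp (-(1/4) * p.1^2))
        * (|p.2| * Real.exp (-p.2)))
      (Integrable.mul_prod
        ((integrable_exp_neg_mul_sq (by norm_num : (0:ℝ) < 1/4)).const_mul
          (Real.exp (1/4 - α))) hgt)
      hcont.aestronglyMeasurable ?_
    refine Filter.Eventually.of_forall fun p => ?_
    obtain ⟨u, t⟩ := p
    simp only [Function.uncurry, hg, norm_mul, Complex.norm_real, Real.norm_eq_abs,
      Complex.norm_exp]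
    rw [hre u t]
    rw [show Real.exp (1/4 - α) * Real.exp (-(1/4) * u^2) * (|t| * Real.exp (-t))
      = |t| * Real.exp ((1/4 - α) + (-(1/4) * u^2) + -t) from by
        rw [Real.exp_add, Real.exp_add]; ring]
    rw [show (1/4 : ℝ) - α - t - u^2/4 = (1/4 - α) + (-(1/4) * u^2) + -t from by ring]
  have step2 : ∫ u : ℝ, ∫ t in Ioi (0:ℝ), g u t = ∫ t in Ioi (0:ℝ), ∫ u : ℝ, g u t :=
    integral_integral_swap hInt
  -- Step 3
  have step3 : ∀ t : ℝ, ∫ u : ℝ, g u t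
      = (2 * Real.sqrt Real.pi : ℝ) * ((t * Real.exp (-(α + t)^2) : ℝ) : ℂ) := by
    intro t
    rw [hg]
    simp only
    rw [integral_const_mul, inner0 ((α:ℂ) + t)]
    push_cast [Complex.ofReal_exp]
    ring
  -- Step 4 : the t-integral
  have step4 : ∫ t in Ioi (0:ℝ), ∫ u : ℝ, g u t
      = (2 * Real.sqrt Real.pi : ℝ) *
        ((∫ t in Ioi (0:ℝ), t * Real.exp (-(α + t)^2) : ℝ) : ℂ) := by
    simp_rw [step3]
    rw [integral_const_mul]
    exact congrArg (fun x => ((2 * Real.sqrt Real.pi : ℝ) : ℂ) * x)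
      (integral_ofReal (𝕜 := ℂ) (f := fun t : ℝ => t * Real.exp (-(α + t)^2)))
  -- Step 5 : real evaluation
  have step5 : ∫ t in Ioi (0:ℝ), t * Real.exp (-(α + t)^2)
      = Real.exp (-α^2)/2 - α * (Real.sqrt Real.pi / 2 * erfc α) := by
    have hfun : (fun t : ℝ => t * Real.exp (-(α + t)^2))
        = fun t : ℝ => (fun s : ℝ => (s - α) * Real.exp (-s^2)) (t + α) := by
      funext t
      simp only [add_sub_cancel_right]
      rw [add_comm α t]
    rw [hfun, integral_shift0 α (fun s : ℝ => (s - α) * Real.exp (-s^2))]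
    have hi1 : IntegrableOn (fun s : ℝ => s * Real.exp (-s^2)) (Ioi α) := by
      simpa using (integrable_mul_exp_neg_mul_sq one_pos).integrableOn (s := Ioi α)
    have hi2 : IntegrableOn (fun s : ℝ => α * Real.exp (-s^2)) (Ioi α) := by
      have := ((integrable_exp_neg_mul_sq one_pos).integrableOn (s := Ioi α)).const_mul α
      simpa [IntegrableOn] using this
    simp_rw [sub_mul]
    rw [integral_sub hi1 hi2, integral_id_mul_exp_Ioi0, integral_const_mul]
    have herfc : ∫ s in Ioi α, Real.exp (-s^2) = Real.sqrt Real.pi / 2 * erfc α := by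
      rw [erfc]
      have hs : Real.sqrt Real.pi ≠ 0 := (Real.sqrt_pos.mpr Real.pi_pos).ne'
      field_simp
    rw [herfc]
  -- assemble
  rw [step1, step2, step4, step5]
  have hs : Real.sqrt Real.pi ≠ 0 := (Real.sqrt_pos.mpr Real.pi_pos).ne'
  have hss : Real.sqrt Real.pi * Real.sqrt Real.pi = Real.pi := Real.mul_self_sqrt Real.pi_pos.le
  have : -((2 * Real.sqrt Real.pi : ℝ) * ((Real.exp (-α^2)/2 - α * (Real.sqrt Real.pi / 2 * erfc α) : ℝ) : ℂ))
      = ((Real.pi * (α * erfc α - Real.exp (-α^2) / Real.sqrt Real.pi) : ℝ) : ℂ) := by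
    push_cast
    have : (Real.pi : ℂ) = (Real.sqrt Real.pi : ℂ) * (Real.sqrt Real.pi : ℂ) := by
      norm_cast; exact hss.symm
    rw [this]
    have hsc : (Real.sqrt Real.pi : ℂ) ≠ 0 := by exact_mod_cast hs
    field_simp
    ring
  rw [this]
  push_cast
  ring
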